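/- In the group ℤ generated by {a, a⁻¹}, the singleton set {0} is a rational subset (indeed its set of reduced representatives {ε} is regular), but it is not a VPL^∀ set: its full preimage π⁻¹(0) ⊆ {a, a⁻¹}* is not a visibly pushdown language for any partition of the alphabet. -/

import Mathlib

/-!
`{0}` is the image of the regular language `{ε}`. For the word problem `π⁻¹(0)`, whatever the
partition, one can order the two letters as `x, y` so that `x` is not a call or `y` is not a
response. Then no letter of `xᵐyⁿ` pops a symbol pushed by an earlier letter, so a VPA reads these
words exactly like the finite automaton obtained by forgetting its stack. That automaton would
accept `xᵐyⁿ` iff `m = n`, which Myhill–Nerode forbids.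
-/

inductive VKind | call | internal | response
deriving DecidableEq

/-- A (nondeterministic) visibly pushdown automaton over alphabet `A`
partitioned by `kind` into call, internal and response letters. -/
structure VPA (A : Type) (kind : A → VKind) where
  Q : Type
  Γ : Type
  [finQ : Fintype Q]
  [finΓ : Fintype Γ]
  init : Q
  accept : Set Q
  /-- transitions on call letters: push one symbol, do not inspect the stack -/
  δc : Q → A → Set (Q × Γ)
  /-- transitions on internal letters: do not inspect or modify the stack -/
  δi : Q → A → Set Q
  /-- transitions on response letters: pop the topmost stack symbol -/
  δr : Q → A → Γ → Set Q
  /-- transitions on response letters read on the empty stack (bottom symbol) -/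
  δb : Q → A → Set Q

namespace VPA

variable {A : Type} {kind : A → VKind}

inductive Steps (M : VPA A kind) : M.Q × List M.Γ → List A → M.Q × List M.Γ → Prop
  | nil (c) : Steps M c [] c
  | call {q s a q' γ w c} : kind a = .call → (q', γ) ∈ M.δc q a →
      Steps M (q', γ :: s) w c → Steps M (q, s) (a :: w) c
  | internal {q s a q' w c} : kind a = .internal → q' ∈ M.δi q a →
      Steps M (q', s) w c → Steps M (q, s) (a :: w) c
  | pop {q γ s a q' w c} : kind a = .response → q' ∈ M.δr q a γ →
      Steps M (q', s) w c → Steps M (q, γ :: s) (a :: w) c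
  | popEmpty {q a q' w c} : kind a = .response → q' ∈ M.δb q a →
      Steps M (q', []) w c → Steps M (q, []) (a :: w) c

/-- A VPA accepts a word if reading it from the initial state with empty stack
can end in an accepting state (with arbitrary stack contents). -/
def Accepts (M : VPA A kind) (w : List A) : Prop :=
  ∃ c : M.Q × List M.Γ, M.Steps (M.init, []) w c ∧ c.1 ∈ M.accept

end VPA

/-- `L` is a visibly pushdown language over the partition `kind`. -/
def IsVPL {A : Type} (kind : A → VKind) (L : Set (List A)) : Prop :=
  ∃ M : VPA A kind, L = {w | M.Accepts w}

inductive ZA | a | ainv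
deriving DecidableEq

/-- The projection of words over {a, a⁻¹} onto ℤ. -/
def projZ (w : List ZA) : ℤ :=
  (w.map (fun l => match l with | ZA.a => (1 : ℤ) | ZA.ainv => (-1 : ℤ))).sum

namespace NFA

variable {α σ : Type*} {N : NFA α σ}

theorem mem_evalFrom_singleton_cons {s t : σ} {a : α} {x : List α} :
    t ∈ N.evalFrom {s} (a :: x) ↔ ∃ s' ∈ N.step s a, t ∈ N.evalFrom {s'} x := by
  rw [evalFrom_cons, stepSet_singleton, mem_evalFrom_iff_exists]

theorem isRegular_accepts [Finite σ] (N : NFA α σ) : N.accepts.IsRegular :=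
  Language.isRegular_iff.2 ⟨Set σ, Fintype.ofFinite _, N.toDFA, N.toDFA_correct⟩

end NFA

namespace Language

theorem isRegular_singleton_nil {α : Type*} : ({[]} : Language α).IsRegular := by
  refine .of_finite_range_leftQuotient <| (Set.toFinite ({{[]}, 0} : Set (Language α))).subset ?_
  rintro _ ⟨x, rfl⟩
  cases x with
  | nil => exact .inl rfl
  | cons a x => exact .inr <| Set.eq_empty_of_forall_notMem fun y hy => List.cons_ne_nil _ _ hy

/-- The classical `aⁿbⁿ` argument: the left quotients by `xᵐ` are pairwise distinct. -/
theorem not_isRegular_of_replicate_append_mem_iff {α : Type*} {L : Language α} {x y : α}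
    (hL : ∀ m n, List.replicate m x ++ List.replicate n y ∈ L ↔ m = n) : ¬ L.IsRegular := by
  intro hreg
  obtain ⟨m, n, hmn, hq⟩ := Set.Finite.exists_lt_map_eq_of_forall_mem
    (f := fun m => L.leftQuotient (List.replicate m x)) (fun m => Set.mem_range_self _)
    hreg.finite_range_leftQuotient
  have hm : List.replicate m y ∈ L.leftQuotient (List.replicate m x) := (hL m m).2 rfl
  rw [hq, mem_leftQuotient, hL] at hm
  exact hmn.ne' hm

end Language

namespace VPA

variable {A : Type} {kind : A → VKind} {M : VPA A kind}

theorem steps_append_iff {c c'' : M.Q × List M.Γ} {u v : List A} :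
    M.Steps c (u ++ v) c'' ↔ ∃ c', M.Steps c u c' ∧ M.Steps c' v c'' := by
  induction u generalizing c with
  | nil => exact ⟨fun h => ⟨c, .nil c, h⟩, fun ⟨_, .nil _, h⟩ => h⟩
  | cons a u ih =>
    constructor
    · intro h
      cases h with
      | call hk hδ h => obtain ⟨c', h₁, h₂⟩ := ih.1 h; exact ⟨c', .call hk hδ h₁, h₂⟩
      | internal hk hδ h => obtain ⟨c', h₁, h₂⟩ := ih.1 h; exact ⟨c', .internal hk hδ h₁, h₂⟩
      | pop hk hδ h => obtain ⟨c', h₁, h₂⟩ := ih.1 h; exact ⟨c', .pop hk hδ h₁, h₂⟩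
      | popEmpty hk hδ h => obtain ⟨c', h₁, h₂⟩ := ih.1 h; exact ⟨c', .popEmpty hk hδ h₁, h₂⟩
    · rintro ⟨c', h₁, h₂⟩
      cases h₁ with
      | call hk hδ h => exact .call hk hδ (ih.2 ⟨c', h, h₂⟩)
      | internal hk hδ h => exact .internal hk hδ (ih.2 ⟨c', h, h₂⟩)
      | pop hk hδ h => exact .pop hk hδ (ih.2 ⟨c', h, h₂⟩)
      | popEmpty hk hδ h => exact .popEmpty hk hδ (ih.2 ⟨c', h, h₂⟩)

variable (M) in
def blindNFA : NFA A M.Q where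
  step q a := match kind a with
    | .call => Prod.fst '' M.δc q a
    | .internal => M.δi q a
    | .response => M.δb q a
  start := {M.init}
  accept := M.accept

theorem Steps.mem_blindNFA_evalFrom_of_forall_ne_response {c c' : M.Q × List M.Γ} {w : List A}
    (h : M.Steps c w c') (hw : ∀ a ∈ w, kind a ≠ .response) :
    c'.1 ∈ M.blindNFA.evalFrom {c.1} w := by
  induction h with
  | nil => exact rfl
  | call hk hδ _ ih =>
    exact NFA.mem_evalFrom_singleton_cons.2
      ⟨_, by simp only [blindNFA, hk]; exact ⟨_, hδ, rfl⟩, ih fun a ha => hw a (.tail _ ha)⟩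
  | internal hk hδ _ ih =>
    exact NFA.mem_evalFrom_singleton_cons.2
      ⟨_, by simp only [blindNFA, hk]; exact hδ, ih fun a ha => hw a (.tail _ ha)⟩
  | pop hk => exact absurd hk (hw _ List.mem_cons_self)
  | popEmpty hk => exact absurd hk (hw _ List.mem_cons_self)

theorem Steps.mem_blindNFA_evalFrom_of_forall_ne_call {q : M.Q} {c : M.Q × List M.Γ}
    {w : List A} (h : M.Steps (q, []) w c) (hw : ∀ a ∈ w, kind a ≠ .call) :
    c.1 ∈ M.blindNFA.evalFrom {q} w ∧ c.2 = [] := by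
  generalize hc₀ : (q, ([] : List M.Γ)) = c₀ at h
  induction h generalizing q with
  | nil => subst hc₀; exact ⟨rfl, rfl⟩
  | call hk => exact absurd hk (hw _ List.mem_cons_self)
  | internal hk hδ _ ih =>
    cases hc₀
    obtain ⟨h₁, h₂⟩ := ih (fun a ha => hw a (.tail _ ha)) rfl
    exact ⟨NFA.mem_evalFrom_singleton_cons.2 ⟨_, by simp only [blindNFA, hk]; exact hδ, h₁⟩, h₂⟩
  | pop => cases hc₀
  | popEmpty hk hδ _ ih =>
    cases hc₀
    obtain ⟨h₁, h₂⟩ := ih (fun a ha => hw a (.tail _ ha)) rfl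
    exact ⟨NFA.mem_evalFrom_singleton_cons.2 ⟨_, by simp only [blindNFA, hk]; exact hδ, h₁⟩, h₂⟩

theorem exists_steps_of_mem_blindNFA_evalFrom_of_forall_ne_response {q q' : M.Q} {w : List A}
    (h : q' ∈ M.blindNFA.evalFrom {q} w) (hw : ∀ a ∈ w, kind a ≠ .response) (s : List M.Γ) :
    ∃ s', M.Steps (q, s) w (q', s') := by
  induction w generalizing q s with
  | nil => cases h; exact ⟨s, .nil _⟩
  | cons a w ih =>
    obtain ⟨q₁, hstep, hrest⟩ := NFA.mem_evalFrom_singleton_cons.1 h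
    have hw' : ∀ b ∈ w, kind b ≠ .response := fun b hb => hw b (.tail _ hb)
    cases hk : kind a with
    | call =>
      simp only [blindNFA, hk] at hstep
      obtain ⟨⟨_, γ⟩, hδ, rfl⟩ := hstep
      obtain ⟨s', hs⟩ := ih hrest hw' (γ :: s)
      exact ⟨s', .call hk hδ hs⟩
    | internal =>
      simp only [blindNFA, hk] at hstep
      obtain ⟨s', hs⟩ := ih hrest hw' s
      exact ⟨s', .internal hk hstep hs⟩
    | response => exact absurd hk (hw a List.mem_cons_self)

theorem steps_of_mem_blindNFA_evalFrom_of_forall_ne_call {q q' : M.Q} {w : List A}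
    (h : q' ∈ M.blindNFA.evalFrom {q} w) (hw : ∀ a ∈ w, kind a ≠ .call) :
    M.Steps (q, []) w (q', []) := by
  induction w generalizing q with
  | nil => cases h; exact .nil _
  | cons a w ih =>
    obtain ⟨q₁, hstep, hrest⟩ := NFA.mem_evalFrom_singleton_cons.1 h
    have hw' : ∀ b ∈ w, kind b ≠ .call := fun b hb => hw b (.tail _ hb)
    cases hk : kind a with
    | call => exact absurd hk (hw a List.mem_cons_self)
    | internal =>
      simp only [blindNFA, hk] at hstep
      exact .internal hk hstep (ih hrest hw')
    | response =>
      simp only [blindNFA, hk] at hstep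
      exact .popEmpty hk hstep (ih hrest hw')

theorem accepts_append_iff {u v : List A} (hu : ∀ a ∈ u, kind a ≠ .call)
    (hv : ∀ a ∈ v, kind a ≠ .response) :
    M.Accepts (u ++ v) ↔ u ++ v ∈ M.blindNFA.accepts := by
  rw [NFA.mem_accepts, NFA.evalFrom_append]
  constructor
  · rintro ⟨c, hsteps, hacc⟩
    obtain ⟨c₁, hu', hv'⟩ := steps_append_iff.1 hsteps
    obtain ⟨h₁, hc₁⟩ := hu'.mem_blindNFA_evalFrom_of_forall_ne_call hu
    obtain ⟨q₁, s₁⟩ := c₁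
    cases hc₁
    exact ⟨c.1, hacc, NFA.mem_evalFrom_iff_exists.2
      ⟨q₁, h₁, hv'.mem_blindNFA_evalFrom_of_forall_ne_response hv⟩⟩
  · rintro ⟨q, hacc, h⟩
    obtain ⟨q₁, h₁, h₂⟩ := NFA.mem_evalFrom_iff_exists.1 h
    obtain ⟨s, hs⟩ := exists_steps_of_mem_blindNFA_evalFrom_of_forall_ne_response h₂ hv []
    exact ⟨(q, s), steps_append_iff.2
      ⟨_, steps_of_mem_blindNFA_evalFrom_of_forall_ne_call h₁ hu, hs⟩, hacc⟩

end VPA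

theorem not_isVPL_of_replicate_append_mem_iff {A : Type} {kind : A → VKind} {L : Set (List A)}
    {x y : A} (hxy : kind x = .call → kind y ≠ .response)
    (hL : ∀ m n, List.replicate m x ++ List.replicate n y ∈ L ↔ m = n) : ¬ IsVPL kind L := by
  rintro ⟨M, rfl⟩
  have := M.finQ
  refine Language.not_isRegular_of_replicate_append_mem_iff (x := x) (y := y) (fun m n => ?_)
    M.blindNFA.isRegular_accepts
  have hx : ∀ a ∈ List.replicate m x, a = x := fun _ => List.eq_of_mem_replicate
  have hy : ∀ a ∈ List.replicate n y, a = y := fun _ => List.eq_of_mem_replicate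
  rw [← hL m n]
  by_cases hcall : kind x = .call
  · have hnr : ∀ a ∈ List.replicate m x ++ List.replicate n y, kind a ≠ .response := by
      simp only [List.mem_append]
      rintro a (ha | ha)
      · simp [hx a ha, hcall]
      · rw [hy a ha]; exact hxy hcall
    simpa using (M.accepts_append_iff (u := []) (by simp) hnr).symm
  by_cases hresp : kind y = .response
  · have hnc : ∀ a ∈ List.replicate m x ++ List.replicate n y, kind a ≠ .call := by
      simp only [List.mem_append]
      rintro a (ha | ha)
      · rw [hx a ha]; exact hcall
      · simp [hy a ha, hresp]
    simpa using (M.accepts_append_iff (v := []) hnc (by simp)).symm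
  exact (M.accepts_append_iff (fun a ha => hx a ha ▸ hcall) (fun a ha => hy a ha ▸ hresp)).symm

theorem projZ_replicate_append_replicate_eq_zero_iff {x y : ZA} (hxy : x ≠ y) (m n : ℕ) :
    projZ (List.replicate m x ++ List.replicate n y) = 0 ↔ m = n := by
  cases x <;> cases y <;>
    simp_all [projZ, List.map_replicate, List.sum_replicate] <;> omega

/-- In ℤ = ⟨a⟩, the set {0} is rational — its set of reduced representatives
{ε} is regular — but its full preimage (the word problem of ℤ) is not a VPL
for any partition of the alphabet, so {0} is not a VPL^∀ set. -/
theorem zero_rational_but_not_VPLforall :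
    (Language.IsRegular ({[]} : Language ZA) ∧ projZ '' {([] : List ZA)} = {0}) ∧
    (∀ kind : ZA → VKind, ¬ IsVPL kind (projZ ⁻¹' {0})) := by
  refine ⟨⟨Language.isRegular_singleton_nil, by simp [projZ]⟩, fun kind => ?_⟩
  by_cases h : kind .a = .call ∧ kind .ainv = .response
  · exact not_isVPL_of_replicate_append_mem_iff (x := .ainv) (y := .a)
      (fun hc => by simp [h.2] at hc)
      (projZ_replicate_append_replicate_eq_zero_iff (by decide))
  · exact not_isVPL_of_replicate_append_mem_iff (x := .a) (y := .ainv)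
      (fun hc hr => h ⟨hc, hr⟩) (projZ_replicate_append_replicate_eq_zero_iff (by decide))
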